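/- For the function f(x,y) = 2/((x+1)^2+y^2) + 2/((x-1)^2+y^2) + 1/(2(x^2+(y+1)^2)) + 1/(2(x^2+(y-1)^2)) and λ(x,y) = 4f(x,y)/(x^2+y^2+1), the Euclidean Laplacian of log λ equals 256(x^2+y^2)/[5 + 5x^4 - 6y^2 + 5y^4 + 2x^2(3+5y^2)]^2 at all points where f is defined and positive. -/

import Mathlib

/-! Off the four singular points, `λ = 4 T / (D₁ D₂ D₃ D₄)` where `T` is the quartic in the
denominator of the claim and `Dᵢ = |z - pᵢ|²`, so `log λ = log 4 + log T - ∑ log Dᵢ` near the point.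
Each `log |z - p|²` is harmonic, and `Δ log T = (T ΔT - |∇T|²) / T²`, where
`T ΔT - |∇T|² = 256 (x² + y²)`. -/

/-- The shape potential factor on the parallelogram shape sphere. -/
noncomputable def fP (x y : ℝ) : ℝ :=
  2 / ((x + 1) ^ 2 + y ^ 2) + 2 / ((x - 1) ^ 2 + y ^ 2) +
    1 / (2 * (x ^ 2 + (y + 1) ^ 2)) + 1 / (2 * (x ^ 2 + (y - 1) ^ 2))

/-- The conformal factor of the Jacobi–Maupertuis metric in stereographic coordinates. -/
noncomputable def lamP (x y : ℝ) : ℝ := 4 * fP x y / (x ^ 2 + y ^ 2 + 1)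

/-- The Euclidean Laplacian of a function of two real variables. -/
noncomputable def lap2 (g : ℝ → ℝ → ℝ) (x y : ℝ) : ℝ :=
  deriv (fun t => deriv (fun s => g s y) t) x +
    deriv (fun t => deriv (fun s => g x s) t) y

open Filter Topology

def HasSecondDerivAt (φ : ℝ → ℝ) (c t : ℝ) : Prop :=
  ∃ φ' : ℝ → ℝ, (∀ᶠ s in 𝓝 t, HasDerivAt φ (φ' s) s) ∧ HasDerivAt φ' c t

namespace HasSecondDerivAt

variable {φ ψ : ℝ → ℝ} {c d t : ℝ}

theorem deriv_deriv (h : HasSecondDerivAt φ c t) : deriv (deriv φ) t = c := by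
  obtain ⟨φ', hφ, hφ'⟩ := h
  have hderiv : deriv φ =ᶠ[𝓝 t] φ' := hφ.mono fun s hs => hs.deriv
  rw [hderiv.deriv_eq, hφ'.deriv]

theorem congr_of_eventuallyEq (h : HasSecondDerivAt ψ c t) (hφψ : φ =ᶠ[𝓝 t] ψ) :
    HasSecondDerivAt φ c t := by
  obtain ⟨ψ', hψ, hψ'⟩ := h
  refine ⟨ψ', ?_, hψ'⟩
  filter_upwards [hψ, hφψ.eventuallyEq_nhds] with s hs hφψs
  exact hs.congr_of_eventuallyEq hφψs

theorem sub (hφ : HasSecondDerivAt φ c t) (hψ : HasSecondDerivAt ψ d t) :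
    HasSecondDerivAt (fun s => φ s - ψ s) (c - d) t := by
  obtain ⟨φ', hφ, hφ'⟩ := hφ
  obtain ⟨ψ', hψ, hψ'⟩ := hψ
  exact ⟨fun s => φ' s - ψ' s, (hφ.and hψ).mono fun s hs => hs.1.sub hs.2, hφ'.sub hψ'⟩

theorem const_add (a : ℝ) (hφ : HasSecondDerivAt φ c t) :
    HasSecondDerivAt (fun s => a + φ s) c t := by
  obtain ⟨φ', hφ, hφ'⟩ := hφ
  exact ⟨φ', hφ.mono fun s hs => hs.const_add a, hφ'⟩

end HasSecondDerivAt

theorem hasSecondDerivAt_log {q q' : ℝ → ℝ} {c t : ℝ}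
    (hq : ∀ᶠ s in 𝓝 t, HasDerivAt q (q' s) s) (hq' : HasDerivAt q' c t) (ht : q t ≠ 0) :
    HasSecondDerivAt (fun s => Real.log (q s)) ((q t * c - q' t ^ 2) / q t ^ 2) t := by
  refine ⟨fun s => q' s / q s, ?_, ?_⟩
  · filter_upwards [hq, hq.self_of_nhds.continuousAt.eventually_ne ht] with s hs hqs
    exact hs.log hqs
  · exact (hq'.fun_div hq.self_of_nhds ht).congr_deriv (by ring)

def HasLap2At (g : ℝ → ℝ → ℝ) (L x y : ℝ) : Prop :=
  ∃ cx cy, HasSecondDerivAt (fun s => g s y) cx x ∧ HasSecondDerivAt (fun t => g x t) cy y ∧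
    cx + cy = L

namespace HasLap2At

variable {g h : ℝ → ℝ → ℝ} {L M x y : ℝ}

theorem lap2_eq (hg : HasLap2At g L x y) : lap2 g x y = L := by
  obtain ⟨cx, cy, hx, hy, rfl⟩ := hg
  rw [lap2, hx.deriv_deriv, hy.deriv_deriv]

theorem congr_of_eventuallyEq (hh : HasLap2At h L x y)
    (hgh : Function.uncurry g =ᶠ[𝓝 (x, y)] Function.uncurry h) : HasLap2At g L x y := by
  obtain ⟨cx, cy, hx, hy, hL⟩ := hh
  refine ⟨cx, cy, hx.congr_of_eventuallyEq ?_, hy.congr_of_eventuallyEq ?_, hL⟩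
  · exact hgh.comp_tendsto (tendsto_id.prodMk_nhds tendsto_const_nhds)
  · exact hgh.comp_tendsto (tendsto_const_nhds.prodMk_nhds tendsto_id)

theorem sub (hg : HasLap2At g L x y) (hh : HasLap2At h M x y) :
    HasLap2At (fun a b => g a b - h a b) (L - M) x y := by
  obtain ⟨cx, cy, hx, hy, rfl⟩ := hg
  obtain ⟨dx, dy, kx, ky, rfl⟩ := hh
  exact ⟨cx - dx, cy - dy, hx.sub kx, hy.sub ky, by ring⟩

theorem const_add (k : ℝ) (hg : HasLap2At g L x y) :
    HasLap2At (fun a b => k + g a b) L x y := by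
  obtain ⟨cx, cy, hx, hy, rfl⟩ := hg
  exact ⟨cx, cy, hx.const_add k, hy.const_add k, rfl⟩

end HasLap2At

theorem hasLap2At_log {P Px Py Pxx Pyy : ℝ → ℝ → ℝ} {x y : ℝ}
    (hPx : ∀ a b, HasDerivAt (fun s => P s b) (Px a b) a)
    (hPxx : ∀ a b, HasDerivAt (fun s => Px s b) (Pxx a b) a)
    (hPy : ∀ a b, HasDerivAt (fun t => P a t) (Py a b) b)
    (hPyy : ∀ a b, HasDerivAt (fun t => Py a t) (Pyy a b) b) (hP : P x y ≠ 0) :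
    HasLap2At (fun a b => Real.log (P a b))
      ((P x y * (Pxx x y + Pyy x y) - Px x y ^ 2 - Py x y ^ 2) / P x y ^ 2) x y :=
  ⟨_, _, hasSecondDerivAt_log (.of_forall fun a => hPx a y) (hPxx x y) hP,
    hasSecondDerivAt_log (.of_forall fun b => hPy x b) (hPyy x y) hP, by ring⟩

theorem hasLap2At_log_sq_dist (p q x y : ℝ) (h : (x - p) ^ 2 + (y - q) ^ 2 ≠ 0) :
    HasLap2At (fun a b => Real.log ((a - p) ^ 2 + (b - q) ^ 2)) 0 x y := by
  have hsq (u r : ℝ) : HasDerivAt (fun s => (s - r) ^ 2) (2 * (u - r)) u := by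
    simpa using ((hasDerivAt_id' u).sub_const r).fun_pow 2
  have hlin (u r : ℝ) : HasDerivAt (fun s => 2 * (s - r)) 2 u := by
    simpa using ((hasDerivAt_id' u).sub_const r).const_mul 2
  convert hasLap2At_log (P := fun a b => (a - p) ^ 2 + (b - q) ^ 2)
    (fun a b => (hsq a p).add_const _) (fun a b => hlin a p)
    (fun a b => (hsq b q).const_add _) (fun a b => hlin b q) h using 1
  field_simp
  ring

def lamNum (a b : ℝ) : ℝ :=
  5 + 5 * a ^ 4 - 6 * b ^ 2 + 5 * b ^ 4 + 2 * a ^ 2 * (3 + 5 * b ^ 2)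

theorem lamNum_pos (a b : ℝ) : 0 < lamNum a b := by
  unfold lamNum
  nlinarith [sq_nonneg (b ^ 2 - 3 / 5), sq_nonneg a, sq_nonneg (a * b), sq_nonneg (a ^ 2)]

theorem hasLap2At_log_lamNum (x y : ℝ) :
    HasLap2At (fun a b => Real.log (lamNum a b)) (256 * (x ^ 2 + y ^ 2) / lamNum x y ^ 2) x y := by
  have hx (a b : ℝ) : HasDerivAt (fun s => lamNum s b) (20 * a ^ 3 + 12 * a + 20 * a * b ^ 2) a :=
    (((((hasDerivAt_pow 4 a).const_mul 5).const_add 5).sub_const (6 * b ^ 2)).add_const (5 * b ^ 4)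
      |>.add (((hasDerivAt_pow 2 a).const_mul 2).mul_const (3 + 5 * b ^ 2))).congr_deriv
      (by push_cast; ring)
  have hxx (a b : ℝ) : HasDerivAt (fun s => 20 * s ^ 3 + 12 * s + 20 * s * b ^ 2)
      (60 * a ^ 2 + 12 + 20 * b ^ 2) a :=
    (((hasDerivAt_pow 3 a).const_mul 20).add ((hasDerivAt_id' a).const_mul 12)
      |>.add (((hasDerivAt_id' a).const_mul 20).mul_const (b ^ 2))).congr_deriv (by push_cast; ring)
  have hy (a b : ℝ) : HasDerivAt (fun t => lamNum a t) (20 * b ^ 3 - 12 * b + 20 * a ^ 2 * b) b :=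
    ((((hasDerivAt_pow 2 b).const_mul 6).const_sub (5 + 5 * a ^ 4)).add
      ((hasDerivAt_pow 4 b).const_mul 5) |>.add
      (((hasDerivAt_pow 2 b).const_mul 5).const_add 3 |>.const_mul (2 * a ^ 2))).congr_deriv
      (by push_cast; ring)
  have hyy (a b : ℝ) : HasDerivAt (fun t => 20 * t ^ 3 - 12 * t + 20 * a ^ 2 * t)
      (60 * b ^ 2 - 12 + 20 * a ^ 2) b :=
    (((hasDerivAt_pow 3 b).const_mul 20).sub ((hasDerivAt_id' b).const_mul 12)
      |>.add ((hasDerivAt_id' b).const_mul (20 * a ^ 2))).congr_deriv (by push_cast; ring)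
  convert hasLap2At_log hx hxx hy hyy (lamNum_pos x y).ne' using 2
  unfold lamNum
  ring

theorem lamP_eq (a b : ℝ) (h1 : (a + 1) ^ 2 + b ^ 2 ≠ 0) (h2 : (a - 1) ^ 2 + b ^ 2 ≠ 0)
    (h3 : a ^ 2 + (b + 1) ^ 2 ≠ 0) (h4 : a ^ 2 + (b - 1) ^ 2 ≠ 0) :
    lamP a b = 4 * lamNum a b / (((a + 1) ^ 2 + b ^ 2) * ((a - 1) ^ 2 + b ^ 2) *
      (a ^ 2 + (b + 1) ^ 2) * (a ^ 2 + (b - 1) ^ 2)) := by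
  have h5 : a ^ 2 + b ^ 2 + 1 ≠ 0 := by positivity
  unfold lamP fP lamNum
  field_simp
  ring

theorem log_lamP_eq (a b : ℝ) (h1 : (a + 1) ^ 2 + b ^ 2 ≠ 0) (h2 : (a - 1) ^ 2 + b ^ 2 ≠ 0)
    (h3 : a ^ 2 + (b + 1) ^ 2 ≠ 0) (h4 : a ^ 2 + (b - 1) ^ 2 ≠ 0) :
    Real.log (lamP a b) = Real.log 4 + Real.log (lamNum a b) - Real.log ((a + 1) ^ 2 + b ^ 2) -
      Real.log ((a - 1) ^ 2 + b ^ 2) - Real.log (a ^ 2 + (b + 1) ^ 2) -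
      Real.log (a ^ 2 + (b - 1) ^ 2) := by
  have hT := (lamNum_pos a b).ne'
  have h12 := mul_ne_zero h1 h2
  have h123 := mul_ne_zero h12 h3
  rw [lamP_eq a b h1 h2 h3 h4, Real.log_div (mul_ne_zero four_ne_zero hT) (mul_ne_zero h123 h4),
    Real.log_mul four_ne_zero hT, Real.log_mul h123 h4, Real.log_mul h12 h3, Real.log_mul h1 h2]
  ring

theorem log_lamP_eventuallyEq (x y : ℝ) (h1 : (x + 1) ^ 2 + y ^ 2 ≠ 0)
    (h2 : (x - 1) ^ 2 + y ^ 2 ≠ 0) (h3 : x ^ 2 + (y + 1) ^ 2 ≠ 0) (h4 : x ^ 2 + (y - 1) ^ 2 ≠ 0) :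
    Function.uncurry (fun a b => Real.log (lamP a b)) =ᶠ[𝓝 (x, y)]
      Function.uncurry (fun a b => Real.log 4 + Real.log (lamNum a b) -
        Real.log ((a + 1) ^ 2 + b ^ 2) - Real.log ((a - 1) ^ 2 + b ^ 2) -
        Real.log (a ^ 2 + (b + 1) ^ 2) - Real.log (a ^ 2 + (b - 1) ^ 2)) := by
  have hne (D : ℝ × ℝ → ℝ) (hD : Continuous D) (h : D (x, y) ≠ 0) : ∀ᶠ p in 𝓝 (x, y), D p ≠ 0 :=
    hD.continuousAt.eventually_ne h
  filter_upwards [hne (fun p => (p.1 + 1) ^ 2 + p.2 ^ 2) (by fun_prop) h1,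
    hne (fun p => (p.1 - 1) ^ 2 + p.2 ^ 2) (by fun_prop) h2,
    hne (fun p => p.1 ^ 2 + (p.2 + 1) ^ 2) (by fun_prop) h3,
    hne (fun p => p.1 ^ 2 + (p.2 - 1) ^ 2) (by fun_prop) h4] with p hp1 hp2 hp3 hp4
  exact log_lamP_eq p.1 p.2 hp1 hp2 hp3 hp4

theorem laplacian_log_lambda (x y : ℝ)
    (h1 : (x + 1) ^ 2 + y ^ 2 ≠ 0) (h2 : (x - 1) ^ 2 + y ^ 2 ≠ 0)
    (h3 : x ^ 2 + (y + 1) ^ 2 ≠ 0) (h4 : x ^ 2 + (y - 1) ^ 2 ≠ 0) :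
    lap2 (fun a b => Real.log (lamP a b)) x y =
      256 * (x ^ 2 + y ^ 2) /
        (5 + 5 * x ^ 4 - 6 * y ^ 2 + 5 * y ^ 4 + 2 * x ^ 2 * (3 + 5 * y ^ 2)) ^ 2 := by
  have hlap := ((((hasLap2At_log_lamNum x y).const_add (Real.log 4)).sub
    (hasLap2At_log_sq_dist (-1) 0 x y (by simpa using h1))).sub
    (hasLap2At_log_sq_dist 1 0 x y (by simpa using h2))).sub
    (hasLap2At_log_sq_dist 0 (-1) x y (by simpa using h3)) |>.sub
    (hasLap2At_log_sq_dist 0 1 x y (by simpa using h4))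
  simp only [sub_neg_eq_add, sub_zero] at hlap
  rw [(hlap.congr_of_eventuallyEq (log_lamP_eventuallyEq x y h1 h2 h3 h4)).lap2_eq, lamNum]
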